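/- arXiv:1105.2378 — 2 statements merged into one kernel-verified Lean document; each statement's English description precedes it below -/
import Mathlib

section
/- Let a₁, a₂ ∈ ℝ, α₁, α₂ > 0, and let κ₁, κ₂ ∈ ℝ be arbitrary. Let σ ∈ (0,1), δ ∈ (0,1), N ≥ 1 and C₄ > 0. Define φ₄(x,y) = C₄(−x + N|y|^{2(1−σ)δ}) on U₄ = {(x,y) : −1 < x < N and |y| > 1}. Then φ₄ is a Lyapunov function for L on U₄; in particular there exist C₄′, D₄ > 0 with (Lφ₄)(x,y) ≤ −C₄′·φ₄(x,y) + D₄ for all (x,y) ∈ U₄. -/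
/-!
On `U₄` the coordinate `x` is confined to `(-1, N)`, so every term of `Lφ₄ + φ₄` is bounded
except those growing with `y`: the drift `y² ∂ₓ` contributes `-C₄ y²`, while `∂_y` and `∂_yy`
contribute at most a multiple of `|y|^β` with `β = 2(1-σ)δ < 2`. The quadratic term wins, so
`Lφ₄ ≤ -φ₄ + D`; coercivity on `U₄` comes from `N |y|^β → ∞`.
-/

noncomputable def Lop (a₁ a₂ α₁ α₂ κ₁ κ₂ : ℝ) (Φ : ℝ × ℝ → ℝ) (p : ℝ × ℝ) : ℝ :=
  (a₁ * p.1 - α₁ * p.1 ^ 2 + p.2 ^ 2) * deriv (fun t => Φ (t, p.2)) p.1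
    + (a₂ * p.2 - α₂ * p.1 * p.2) * deriv (fun t => Φ (p.1, t)) p.2
    + κ₁ * deriv (deriv (fun t => Φ (t, p.2))) p.1
    + κ₂ * deriv (deriv (fun t => Φ (p.1, t))) p.2

/-- `φ` is a Lyapunov function for the operator `L` (with the given parameters) on `U`:
(I) `φ` is `C^∞` on `U`; (II) `φ z → ∞` as `|z| → ∞`, `z ∈ U`;
(III) there are `C, D > 0` with `Lφ ≤ -C•φ + D` on `U`. -/
def IsLyapunovOn (a₁ a₂ α₁ α₂ κ₁ κ₂ : ℝ) (φ : ℝ × ℝ → ℝ) (U : Set (ℝ × ℝ)) : Prop :=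
  ContDiffOn ℝ (⊤ : ℕ∞) φ U ∧
    (∀ M : ℝ, ∃ R : ℝ, ∀ z ∈ U, R < ‖z‖ → M < φ z) ∧
    (∃ C > (0:ℝ), ∃ D > (0:ℝ), ∀ z ∈ U, Lop a₁ a₂ α₁ α₂ κ₁ κ₂ φ z ≤ -C * φ z + D)
noncomputable def phi4 (C₄ N σ δ : ℝ) (p : ℝ × ℝ) : ℝ :=
  C₄ * (-p.1 + N * |p.2| ^ (2 * (1 - σ) * δ))

def U4 (N : ℝ) : Set (ℝ × ℝ) := {p : ℝ × ℝ | -1 < p.1 ∧ p.1 < N ∧ 1 < |p.2|}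

open Filter Real Topology

lemma abs_rpow_sub_two_mul_sq {t : ℝ} (ht : t ≠ 0) (γ : ℝ) : |t| ^ (γ - 2) * t ^ 2 = |t| ^ γ := by
  rw [← sq_abs, ← rpow_natCast, ← rpow_add (abs_pos.2 ht)]
  norm_num

lemma hasDerivAt_abs_rpow_of_ne_zero {t : ℝ} (ht : t ≠ 0) (γ : ℝ) :
    HasDerivAt (fun s : ℝ => |s| ^ γ) (γ * |t| ^ (γ - 2) * t) t := by
  convert (hasDerivAt_abs ht).rpow_const (p := γ) (Or.inl (abs_ne_zero.2 ht)) using 1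
  rw [show γ - 1 = γ - 2 + 1 by ring, rpow_add_one (abs_ne_zero.2 ht)]
  linear_combination (-(γ * |t| ^ (γ - 2))) * sign_mul_abs t

lemma hasDerivAt_abs_rpow_mul_self {t : ℝ} (ht : t ≠ 0) (γ : ℝ) :
    HasDerivAt (fun s : ℝ => |s| ^ (γ - 2) * s) ((γ - 1) * |t| ^ (γ - 2)) t := by
  refine ((hasDerivAt_abs_rpow_of_ne_zero ht (γ - 2)).mul (hasDerivAt_id' t)).congr_deriv ?_
  linear_combination (γ - 2) * abs_rpow_sub_two_mul_sq ht (γ - 2)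

lemma exists_mul_rpow_sub_rpow_le {β p c : ℝ} (hβ : 0 ≤ β) (hβp : β < p) (hc : 0 ≤ c) :
    ∃ K, ∀ s ≥ 0, c * s ^ β - s ^ p ≤ K := by
  refine ⟨c * (c ^ (p - β)⁻¹) ^ β, fun s hs => ?_⟩
  have hK : 0 ≤ c * (c ^ (p - β)⁻¹) ^ β := by positivity
  rcases le_or_gt c (s ^ (p - β)) with h | h
  · have : c * s ^ β ≤ s ^ p := calc
      c * s ^ β ≤ s ^ (p - β) * s ^ β := by gcongr
      _ = s ^ p := by rw [← rpow_add' hs (by linarith), sub_add_cancel]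
    linarith
  · have hs' : s ≤ c ^ (p - β)⁻¹ := ((lt_rpow_inv_iff_of_pos hs hc (by linarith)).2 h).le
    have : c * s ^ β ≤ c * (c ^ (p - β)⁻¹) ^ β := by gcongr
    linarith [rpow_nonneg hs p]

-- `phi4 C N σ δ` is `phiRpow C N (2 * (1 - σ) * δ)` by unfolding.
noncomputable def phiRpow (C N β : ℝ) (p : ℝ × ℝ) : ℝ :=
  C * (-p.1 + N * |p.2| ^ β)

lemma lop_phiRpow (a₁ a₂ α₁ α₂ κ₁ κ₂ C N β : ℝ) {p : ℝ × ℝ} (hp : p.2 ≠ 0) :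
    Lop a₁ a₂ α₁ α₂ κ₁ κ₂ (phiRpow C N β) p =
      -C * (a₁ * p.1 - α₁ * p.1 ^ 2 + p.2 ^ 2) + C * N * β * (a₂ - α₂ * p.1) * |p.2| ^ β
        + κ₂ * C * N * β * (β - 1) * |p.2| ^ (β - 2) := by
  obtain ⟨x, y⟩ := p
  have hderiv_fst : deriv (fun t => phiRpow C N β (t, y)) = fun _ => -C := by
    funext t
    exact (((hasDerivAt_id' t).neg.add_const (N * |y| ^ β)).const_mul C).deriv.trans
      (mul_neg_one C)
  have hderiv_snd : ∀ t ≠ 0, HasDerivAt (fun s => phiRpow C N β (x, s))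
      (C * N * β * (|t| ^ (β - 2) * t)) t := fun t ht =>
    ((((hasDerivAt_abs_rpow_of_ne_zero ht β).const_mul N).const_add (-x)).const_mul C).congr_deriv
      (by ring)
  have hderiv_snd_eq : deriv (fun s => phiRpow C N β (x, s)) =ᶠ[𝓝 y]
      fun t => C * N * β * (|t| ^ (β - 2) * t) :=
    (isOpen_ne.eventually_mem hp).mono fun t ht => (hderiv_snd t ht).deriv
  have hderiv_snd_snd := ((hasDerivAt_abs_rpow_mul_self hp β).const_mul (C * N * β)).deriv
  simp only [Lop, hderiv_fst, deriv_const, (hderiv_snd y hp).deriv, hderiv_snd_eq.deriv_eq,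
    hderiv_snd_snd]
  linear_combination C * N * β * (a₂ - α₂ * x) * abs_rpow_sub_two_mul_sq hp β

lemma mul_le_abs_mul_of_abs_le (a : ℝ) {x N : ℝ} (hx : |x| ≤ N) : a * x ≤ |a| * N :=
  (le_abs_self _).trans (abs_mul a x ▸ mul_le_mul_of_nonneg_left hx (abs_nonneg a))

lemma abs_fst_le_of_mem_U4 {N : ℝ} (hN : 1 ≤ N) {p : ℝ × ℝ} (hp : p ∈ U4 N) : |p.1| ≤ N :=
  abs_le.2 ⟨by linarith [hp.1], hp.2.1.le⟩

lemma contDiffOn_phiRpow (C N β : ℝ) : ContDiffOn ℝ (⊤ : ℕ∞) (phiRpow C N β) (U4 N) := by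
  intro p hp
  have hp2 : p.2 ≠ 0 := abs_pos.1 (one_pos.trans hp.2.2)
  have habs : ContDiffAt ℝ (⊤ : ℕ∞) (fun q : ℝ × ℝ => |q.2|) p :=
    (contDiffAt_abs hp2).comp p contDiffAt_snd
  exact (contDiffAt_const.mul (contDiffAt_fst.neg.add
    (contDiffAt_const.mul (habs.rpow_const_of_ne (abs_ne_zero.2 hp2))))).contDiffWithinAt

lemma exists_lt_phiRpow_of_lt_norm {C N β : ℝ} (hC : 0 < C) (hN : 1 ≤ N) (hβ : 0 < β) (M : ℝ) :
    ∃ R, ∀ z ∈ U4 N, R < ‖z‖ → M < phiRpow C N β z := by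
  obtain ⟨R₀, hR₀⟩ := eventually_atTop.1
    ((tendsto_rpow_atTop hβ).const_mul_atTop (by linarith : (0:ℝ) < N) |>.eventually_gt_atTop
      (M / C + N))
  refine ⟨max N R₀, fun z hz hR => ?_⟩
  have hz1 := abs_fst_le_of_mem_U4 hN hz
  have hz2 : max N R₀ < |z.2| := by
    rw [Prod.norm_def, Real.norm_eq_abs, Real.norm_eq_abs, lt_max_iff] at hR
    exact hR.resolve_left (by linarith [le_max_left N R₀])
  have := hR₀ |z.2| (le_of_max_le_right hz2.le)
  rw [phiRpow, ← div_lt_iff₀' hC]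
  linarith [le_abs_self z.1]

lemma exists_lop_phiRpow_le (a₁ a₂ α₁ α₂ κ₁ κ₂ : ℝ) {C N β : ℝ} (hC : 0 ≤ C) (hN : 1 ≤ N)
    (hβ₀ : 0 ≤ β) (hβ₂ : β < 2) :
    ∃ D > 0, ∀ p ∈ U4 N,
      Lop a₁ a₂ α₁ α₂ κ₁ κ₂ (phiRpow C N β) p ≤ -phiRpow C N β p + D := by
  set c := N * (β * (|a₂| + |α₂| * N) + 1)
  obtain ⟨K, hK⟩ := exists_mul_rpow_sub_rpow_le hβ₀ hβ₂ (by positivity : 0 ≤ c)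
  set B := |a₁ + 1| * N + |α₁| * N ^ 2 + K + |κ₂ * N * β * (β - 1)|
  refine ⟨C * |B| + 1, by positivity, fun p hp => ?_⟩
  obtain ⟨x, y⟩ := p
  have hx : |x| ≤ N := abs_fst_le_of_mem_U4 hN hp
  have hy : 1 < |y| := hp.2.2
  rw [lop_phiRpow _ _ _ _ _ _ _ _ _ (abs_pos.1 (one_pos.trans hy))]
  have hx_terms : -(a₁ + 1) * x + α₁ * x ^ 2 ≤ |a₁ + 1| * N + |α₁| * N ^ 2 := by
    have h₁ := mul_le_abs_mul_of_abs_le (-(a₁ + 1)) hx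
    have h₂ := mul_le_abs_mul_of_abs_le α₁ (by rw [abs_pow]; gcongr : |x ^ 2| ≤ N ^ 2)
    rw [abs_neg] at h₁
    linarith
  have hy_growth : N * (β * (a₂ - α₂ * x) + 1) * |y| ^ β - y ^ 2 ≤ K := by
    have hcoeff : N * (β * (a₂ - α₂ * x) + 1) ≤ c := by
      have := mul_le_abs_mul_of_abs_le (-α₂) hx
      rw [abs_neg] at this
      change _ ≤ N * (β * (|a₂| + |α₂| * N) + 1)
      gcongr
      linarith [le_abs_self a₂]
    have := hK |y| (abs_nonneg y)
    rw [rpow_two, sq_abs] at this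
    nlinarith [rpow_nonneg (abs_nonneg y) β]
  have hdiffusion : κ₂ * N * β * (β - 1) * |y| ^ (β - 2) ≤ |κ₂ * N * β * (β - 1)| := by
    have hy' : |y| ^ (β - 2) ≤ 1 := rpow_le_one_of_one_le_of_nonpos hy.le (by linarith)
    exact (mul_le_mul_of_nonneg_right (le_abs_self _) (by positivity)).trans
      (mul_le_of_le_one_right (abs_nonneg _) hy')
  -- `Lφ + φ` regrouped: `C` times the sum of the three bounded pieces above.
  have : C * (-(a₁ + 1) * x + α₁ * x ^ 2 + (N * (β * (a₂ - α₂ * x) + 1) * |y| ^ β - y ^ 2)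
      + κ₂ * N * β * (β - 1) * |y| ^ (β - 2)) ≤ C * |B| :=
    mul_le_mul_of_nonneg_left (by linarith [le_abs_self B]) hC
  simp only [phiRpow]
  linarith

theorem statement5_general (a₁ a₂ α₁ α₂ κ₁ κ₂ σ δ N C₄ : ℝ)
    (hσ₁ : 0 < σ) (hσ₂ : σ < 1) (hδ₁ : 0 < δ) (hδ₂ : δ < 1)
    (hN : 1 ≤ N) (hC₄ : 0 < C₄) :
    IsLyapunovOn a₁ a₂ α₁ α₂ κ₁ κ₂ (phi4 C₄ N σ δ) (U4 N) ∧
      ∃ C₄' > (0:ℝ), ∃ D₄ > (0:ℝ), ∀ p ∈ U4 N,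
        Lop a₁ a₂ α₁ α₂ κ₁ κ₂ (phi4 C₄ N σ δ) p ≤ -C₄' * phi4 C₄ N σ δ p + D₄ := by
  have hβ₀ : 0 < 2 * (1 - σ) * δ := by nlinarith
  have hβ₂ : 2 * (1 - σ) * δ < 2 := by nlinarith
  obtain ⟨D, hD, hbound⟩ := exists_lop_phiRpow_le a₁ a₂ α₁ α₂ κ₁ κ₂ hC₄.le hN hβ₀.le hβ₂
  have hdrift : ∃ C > (0:ℝ), ∃ D > (0:ℝ), ∀ p ∈ U4 N,
      Lop a₁ a₂ α₁ α₂ κ₁ κ₂ (phi4 C₄ N σ δ) p ≤ -C * phi4 C₄ N σ δ p + D :=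
    ⟨1, one_pos, D, hD, fun p hp => (hbound p hp).trans_eq (by rw [neg_one_mul]; rfl)⟩
  exact ⟨⟨contDiffOn_phiRpow _ _ _, exists_lt_phiRpow_of_lt_norm hC₄ hN hβ₀, hdrift⟩, hdrift⟩

/-- `φ₄` is a Lyapunov function on `U₄`. -/
theorem statement5 (a₁ a₂ α₁ α₂ κ₁ κ₂ σ δ N C₄ : ℝ)
    (hα₁ : 0 < α₁) (hα₂ : 0 < α₂)
    (hσ₁ : 0 < σ) (hσ₂ : σ < 1) (hδ₁ : 0 < δ) (hδ₂ : δ < 1)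
    (hN : 1 ≤ N) (hC₄ : 0 < C₄) :
    IsLyapunovOn a₁ a₂ α₁ α₂ κ₁ κ₂ (phi4 C₄ N σ δ) (U4 N) ∧
      ∃ C₄' > (0:ℝ), ∃ D₄ > (0:ℝ), ∀ p ∈ U4 N,
        Lop a₁ a₂ α₁ α₂ κ₁ κ₂ (phi4 C₄ N σ δ) p ≤ -C₄' * phi4 C₄ N σ δ p + D₄ :=
  statement5_general a₁ a₂ α₁ α₂ κ₁ κ₂ σ δ N C₄ hσ₁ hσ₂ hδ₁ hδ₂ hN hC₄
end

section
/- Let a₁, a₂ ∈ ℝ, 0 < α₁ < α₂, κ₁ ≥ 0 and κ₂ > 0. For all z₀, w₀ ∈ ℝ² there exists a nonempty open set U ⊆ ℝ² such that U is contained in the intersection of the closure of A(z₀) and the closure of A(w₀). -/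
/-- `Reachable a₁ a₂ α₁ α₂ κ₁ κ₂ z₀ w`: the point `w` can be reached from `z₀` by
concatenating finitely many integral curves of the control system
`ẋ = a₁x − α₁x² + y² + κ₁u`, `ẏ = a₂y − α₂xy + κ₂v` with constant controls `(u,v)`,
each run for a nonnegative time. -/
inductive Reachable (a₁ a₂ α₁ α₂ κ₁ κ₂ : ℝ) : ℝ × ℝ → ℝ × ℝ → Prop
  | refl (z : ℝ × ℝ) : Reachable a₁ a₂ α₁ α₂ κ₁ κ₂ z z
  | step {z w w' : ℝ × ℝ} (u v T : ℝ) (γ : ℝ → ℝ × ℝ) (hT : 0 ≤ T)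
      (hode : ∀ s ∈ Set.Icc (0:ℝ) T,
        HasDerivAt γ
          (a₁ * (γ s).1 - α₁ * (γ s).1 ^ 2 + (γ s).2 ^ 2 + κ₁ * u,
            a₂ * (γ s).2 - α₂ * (γ s).1 * (γ s).2 + κ₂ * v) s)
      (h0 : γ 0 = w) (hend : γ T = w')
      (hprev : Reachable a₁ a₂ α₁ α₂ κ₁ κ₂ z w) :
      Reachable a₁ a₂ α₁ α₂ κ₁ κ₂ z w'

/-!
Since `κ₂ ≠ 0`, a short burst of a large control `v` moves a point almost vertically to any
height. At a large height `y` the horizontal velocity `a₁x - α₁x² + y²` is positive on any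
bounded range of `x`; near `y = 0` it is negative for `x > max (a₁ / α₁) 0`. Alternating short
Euler steps with vertical corrections therefore lets `x` drift right along a high strip and
left along the axis. So from any start one climbs, drifts right past `w.1`, descends, drifts
left back to `w.1` and finally moves vertically to `w.2`: every point of the half-plane
`x > max (a₁ / α₁) 0` lies in the closure of every accessible set.
-/

open Set Metric Filter Topology
open scoped NNReal

section ODE

variable {E : Type*} [NormedAddCommGroup E] [NormedSpace ℝ E]

theorem exists_hasDerivAt_mem_closedBall [CompleteSpace E] {f : E → E} {x₀ : E} {r C τ : ℝ}
    {L : ℝ≥0} (hr : 0 ≤ r) (hC : ∀ x ∈ closedBall x₀ r, ‖f x‖ ≤ C)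
    (hL : LipschitzOnWith L f (closedBall x₀ r)) (hτ : 0 ≤ τ) (hτr : C * τ < r) :
    ∃ γ : ℝ → E, γ 0 = x₀ ∧ ∀ t ∈ Icc 0 τ, HasDerivAt γ (f (γ t)) t ∧ γ t ∈ closedBall x₀ r := by
  have hC₀ : 0 ≤ C := (norm_nonneg _).trans (hC x₀ (mem_closedBall_self hr))
  obtain ⟨b, hbr, hτb⟩ : ∃ b, C * b < r ∧ τ < b :=
    (((continuous_const_mul C).tendsto τ).eventually_lt_const hτr |>.filter_mono
      (nhdsWithin_le_nhds (s := Ioi τ)) |>.and self_mem_nhdsWithin).exists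
  have h₀ : (0 : ℝ) ∈ Icc (-b) b := ⟨by linarith, by linarith⟩
  lift C to ℝ≥0 using hC₀
  lift r to ℝ≥0 using hr
  have hpl : IsPicardLindelof (fun _ ↦ f) (⟨0, h₀⟩ : Icc (-b) b) x₀ r 0 C L :=
    .of_time_independent hC hL (by simpa using hbr.le)
  obtain ⟨α, hα⟩ := ODE.FunSpace.exists_isFixedPt_next hpl (mem_closedBall_self le_rfl)
  refine ⟨α.compProj, ?_, fun t ht ↦ ⟨?_, α.compProj_mem_closedBall hpl.mul_max_le⟩⟩
  · rw [ODE.FunSpace.compProj_val (t := ⟨0, h₀⟩), ← hα, ODE.FunSpace.next_apply₀]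
  have ht' : t ∈ Icc (-b) b := ⟨by linarith [ht.1], by linarith [ht.2]⟩
  refine (ODE.hasDerivWithinAt_picard_Icc h₀ hpl.continuousOn_uncurry
    α.continuous_compProj.continuousOn (fun _ _ ↦ α.compProj_mem_closedBall hpl.mul_max_le)
    x₀ ht' |>.congr_of_mem (fun t' ht'' ↦ ?_) ht').hasDerivAt
    (Icc_mem_nhds (by linarith [ht.1]) (by linarith [ht.2]))
  nth_rw 1 [← hα]
  rw [ODE.FunSpace.compProj_of_mem ht'', ODE.FunSpace.next_apply]

theorem norm_sub_euler_le {f : E → E} {γ : ℝ → E} {x₀ : E} {r C τ : ℝ} {L : ℝ≥0}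
    (hC : ∀ x ∈ closedBall x₀ r, ‖f x‖ ≤ C) (hL : LipschitzOnWith L f (closedBall x₀ r))
    (hτ : 0 ≤ τ) (hγ₀ : γ 0 = x₀)
    (hγ : ∀ t ∈ Icc 0 τ, HasDerivAt γ (f (γ t)) t ∧ γ t ∈ closedBall x₀ r) :
    ‖γ τ - (x₀ + τ • f x₀)‖ ≤ L * C * τ ^ 2 := by
  have hγx₀ : ∀ t ∈ Icc 0 τ, ‖γ t - x₀‖ ≤ C * τ := fun t ht ↦ by
    have hC₀ : 0 ≤ C := (norm_nonneg _).trans (hC _ (hγ 0 (left_mem_Icc.2 hτ)).2)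
    have := norm_image_sub_le_of_norm_deriv_le_segment' (fun s hs ↦ (hγ s hs).1.hasDerivWithinAt)
      (fun s hs ↦ hC _ (hγ s (Ico_subset_Icc_self hs)).2) t ht
    rw [hγ₀, sub_zero] at this
    exact this.trans (mul_le_mul_of_nonneg_left ht.2 hC₀)
  have hderiv : ∀ t ∈ Icc 0 τ,
      HasDerivWithinAt (fun t ↦ γ t - t • f x₀) (f (γ t) - f x₀) (Icc 0 τ) t := fun t ht ↦
    ((hγ t ht).1.sub ((hasDerivAt_id t).smul_const (f x₀) |>.congr_deriv (one_smul _ _)))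
      |>.hasDerivWithinAt
  have hbound : ∀ t ∈ Ico 0 τ, ‖f (γ t) - f x₀‖ ≤ L * (C * τ) := fun t ht ↦ by
    have ht' := Ico_subset_Icc_self ht
    calc ‖f (γ t) - f x₀‖ ≤ L * ‖γ t - x₀‖ :=
          hL.norm_sub_le (hγ t ht').2 (mem_closedBall_self (dist_nonneg.trans (hγ t ht').2))
      _ ≤ L * (C * τ) := by gcongr; exact hγx₀ t ht'
  have := norm_image_sub_le_of_norm_deriv_le_segment' hderiv hbound τ (right_mem_Icc.2 hτ)
  rw [hγ₀, zero_smul, sub_zero, sub_sub, add_comm] at this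
  exact this.trans_eq (by ring)

end ODE

theorem ContDiff.exists_bound_lipschitzOnWith_closedBall {E F : Type*} [NormedAddCommGroup E]
    [NormedSpace ℝ E] [ProperSpace E] [NormedAddCommGroup F] [NormedSpace ℝ F] {f : E → F}
    (hf : ContDiff ℝ 1 f) (x : E) (r : ℝ) :
    ∃ (C : ℝ) (L : ℝ≥0), (∀ y ∈ closedBall x r, ‖f y‖ ≤ C) ∧ LipschitzOnWith L f (closedBall x r) :=
  have ⟨C, hC⟩ := (isCompact_closedBall x r).exists_bound_of_continuousOn hf.continuous.continuousOn
  have ⟨L, hL⟩ := hf.contDiffOn.exists_lipschitzOnWith one_ne_zero (convex_closedBall x r)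
    (isCompact_closedBall x r)
  ⟨C, L, hC, hL⟩

theorem exists_rel_le_of_forall_exists_add_le {α : Type*} {R : α → α → Prop} [Std.Refl R]
    [IsTrans α R] {S : Set α} {φ : α → ℝ} {G μ : ℝ} (hμ : 0 < μ)
    (hstep : ∀ p ∈ S, φ p < G → ∃ q ∈ S, R p q ∧ φ p + μ ≤ φ q) {p : α} (hp : p ∈ S) :
    ∃ q ∈ S, R p q ∧ G ≤ φ q := by
  obtain ⟨n, hn⟩ := exists_nat_ge ((G - φ p) / μ)
  induction n generalizing p with
  | zero =>
    rw [Nat.cast_zero, div_le_iff₀ hμ, zero_mul, sub_nonpos] at hn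
    exact ⟨p, hp, refl p, hn⟩
  | succ n ih =>
    by_cases hG : G ≤ φ p
    · exact ⟨p, hp, refl p, hG⟩
    obtain ⟨q, hq, hpq, hφq⟩ := hstep p hp (not_le.1 hG)
    obtain ⟨r, hr, hqr, hGr⟩ := ih hq (by
      rw [div_le_iff₀ hμ] at hn ⊢
      push_cast at hn
      linarith)
    exact ⟨r, hr, _root_.trans hpq hqr, hGr⟩

theorem eventually_lt_of_continuous_of_eq_zero {f : ℝ → ℝ} (hf : Continuous f) (h₀ : f 0 = 0)
    {ε : ℝ} (hε : 0 < ε) : ∀ᶠ τ in 𝓝[>] 0, f τ < ε :=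
  ((hf.tendsto' 0 0 h₀).eventually_lt_const hε).filter_mono nhdsWithin_le_nhds

section ControlSystem

variable {a₁ a₂ α₁ α₂ κ₁ κ₂ : ℝ}

theorem Reachable.trans {z w w' : ℝ × ℝ} (h₁ : Reachable a₁ a₂ α₁ α₂ κ₁ κ₂ z w)
    (h₂ : Reachable a₁ a₂ α₁ α₂ κ₁ κ₂ w w') : Reachable a₁ a₂ α₁ α₂ κ₁ κ₂ z w' := by
  induction h₂ with
  | refl => exact h₁
  | step u v T γ hT hode h0 hend _ ih => exact .step u v T γ hT hode h0 hend ih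

instance : Std.Refl (Reachable a₁ a₂ α₁ α₂ κ₁ κ₂) := ⟨Reachable.refl⟩

instance : IsTrans (ℝ × ℝ) (Reachable a₁ a₂ α₁ α₂ κ₁ κ₂) := ⟨fun _ _ _ ↦ Reachable.trans⟩

variable (a₁ a₂ α₁ α₂) in
def drift (z : ℝ × ℝ) : ℝ × ℝ :=
  (a₁ * z.1 - α₁ * z.1 ^ 2 + z.2 ^ 2, a₂ * z.2 - α₂ * z.1 * z.2)

theorem contDiff_drift : ContDiff ℝ 1 (drift a₁ a₂ α₁ α₂) := by
  unfold drift; fun_prop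

theorem exists_reachable_near_euler (hκ₂ : κ₂ ≠ 0) {p : ℝ × ℝ} {r C : ℝ} {L : ℝ≥0} (hr : 0 ≤ r)
    (hC : ∀ z ∈ closedBall p r, ‖drift a₁ a₂ α₁ α₂ z‖ ≤ C)
    (hL : LipschitzOnWith L (drift a₁ a₂ α₁ α₂) (closedBall p r)) (c : ℝ) {τ : ℝ} (hτ : 0 ≤ τ)
    (hτr : (C + |c|) * τ < r) :
    ∃ w, Reachable a₁ a₂ α₁ α₂ κ₁ κ₂ p w ∧
      |w.1 - (p.1 + τ * (drift a₁ a₂ α₁ α₂ p).1)| ≤ L * (C + |c|) * τ ^ 2 ∧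
      |w.2 - (p.2 + τ * ((drift a₁ a₂ α₁ α₂ p).2 + c))| ≤ L * (C + |c|) * τ ^ 2 := by
  set f : ℝ × ℝ → ℝ × ℝ := fun z ↦ drift a₁ a₂ α₁ α₂ z + (0, c)
  have hfC : ∀ z ∈ closedBall p r, ‖f z‖ ≤ C + |c| := fun z hz ↦
    (norm_add_le _ _).trans (add_le_add (hC z hz) (by simp))
  have hfL : LipschitzOnWith L f (closedBall p r) :=
    .of_dist_le_mul fun x hx y hy ↦ by simpa [f] using hL.dist_le_mul x hx y hy
  obtain ⟨γ, hγ₀, hγ⟩ := exists_hasDerivAt_mem_closedBall hr hfC hfL hτ hτr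
  have heuler := norm_sub_euler_le hfC hfL hτ hγ₀ hγ
  -- the push `c` is produced by the controls `u = 0`, `v = c / κ₂`
  refine ⟨γ τ, .step 0 (c / κ₂) τ γ hτ (fun s hs ↦ ?_) hγ₀ rfl (.refl p),
    by simpa [f] using (norm_fst_le _).trans heuler,
    by simpa [f, mul_add] using (norm_snd_le _).trans heuler⟩
  refine (hγ s hs).1.congr_deriv ?_
  simp [f, drift, mul_div_cancel₀ _ hκ₂]

theorem exists_reachable_near_vertical (hκ₂ : κ₂ ≠ 0) (p : ℝ × ℝ) (y : ℝ) {ε : ℝ}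
    (hε : 0 < ε) :
    ∃ q, Reachable a₁ a₂ α₁ α₂ κ₁ κ₂ p q ∧ |q.1 - p.1| < ε ∧ |q.2 - y| < ε := by
  set η := y - p.2
  obtain ⟨C, L, hC, hL⟩ := contDiff_drift.exists_bound_lipschitzOnWith_closedBall p (|η| + 1)
  have hpC := hC p (mem_closedBall_self (by positivity))
  have hC₀ : 0 ≤ C := (norm_nonneg _).trans hpC
  obtain ⟨τ, ⟨hτ₁, hτε⟩, hτ⟩ :=
    (((eventually_lt_of_continuous_of_eq_zero (f := fun τ ↦ 2 * C * τ) (by fun_prop) (by simp)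
      one_pos).and (eventually_lt_of_continuous_of_eq_zero
        (f := fun τ ↦ C * τ + L * (2 * C * τ + |η|) * τ) (by fun_prop) (by simp) hε)).and
      self_mem_nhdsWithin).exists
  -- a push of order `1 / τ` lands the Euler step at height `y`; its horizontal displacement
  -- and its error are both `O(τ)`
  set c := η / τ - (drift a₁ a₂ α₁ α₂ p).2
  have hd₁ : |(drift a₁ a₂ α₁ α₂ p).1| ≤ C := (norm_fst_le _).trans hpC
  have hd₂ : |(drift a₁ a₂ α₁ α₂ p).2| ≤ C := (norm_snd_le _).trans hpC
  have hc : (C + |c|) * τ ≤ 2 * C * τ + |η| := calc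
    (C + |c|) * τ ≤ (C + (|η| / τ + C)) * τ := by
      gcongr
      exact (abs_sub _ _).trans (by rw [abs_div, abs_of_pos hτ]; linarith)
    _ = 2 * C * τ + |η| := by field_simp; ring
  obtain ⟨w, hpw, hw₁, hw₂⟩ :=
    exists_reachable_near_euler (κ₁ := κ₁) hκ₂ (by positivity) hC hL c hτ.le (by linarith)
  have he : L * (C + |c|) * τ ^ 2 ≤ L * (2 * C * τ + |η|) * τ := calc
    L * (C + |c|) * τ ^ 2 = L * ((C + |c|) * τ) * τ := by ring
    _ ≤ L * (2 * C * τ + |η|) * τ := by gcongr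
  have hy : p.2 + τ * ((drift a₁ a₂ α₁ α₂ p).2 + c) = y := by
    simp only [c, η]; field_simp; ring
  have hτd : |τ * (drift a₁ a₂ α₁ α₂ p).1| ≤ C * τ := by
    rw [abs_mul, abs_of_pos hτ, mul_comm]; gcongr
  rw [hy] at hw₂
  refine ⟨w, hpw, ?_, ?_⟩
  · rw [abs_sub_lt_iff]
    constructor <;>
      linarith [(abs_le.1 hw₁).1, (abs_le.1 hw₁).2, (abs_le.1 hτd).1, (abs_le.1 hτd).2]
  · linarith [mul_nonneg hC₀ hτ.le]

theorem exists_march_step (hκ₂ : κ₂ ≠ 0) (R : ℝ) {s δ σ : ℝ} (hs : |s| = 1) (hδ : 0 < δ)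
    (hσ : 0 < σ) :
    ∃ μ > 0, ∀ p ∈ closedBall (0 : ℝ × ℝ) R, δ ≤ s * (drift a₁ a₂ α₁ α₂ p).1 → ∀ Y ρ : ℝ, 0 < ρ →
      ∃ q, Reachable a₁ a₂ α₁ α₂ κ₁ κ₂ p q ∧ s * p.1 + μ ≤ s * q.1 ∧ s * q.1 ≤ s * p.1 + σ ∧
        |q.2 - Y| < ρ := by
  obtain ⟨C, L, hC, hL⟩ :=
    contDiff_drift.exists_bound_lipschitzOnWith_closedBall (0 : ℝ × ℝ) (R + 1)
  obtain ⟨τ, ⟨⟨hτ₁, hτδ⟩, hτσ⟩, hτ⟩ :=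
    ((((eventually_lt_of_continuous_of_eq_zero (f := fun τ ↦ 2 * C * τ) (by fun_prop) (by simp)
      one_pos).and (eventually_lt_of_continuous_of_eq_zero (f := fun τ ↦ 2 * L * C * τ)
        (by fun_prop) (by simp) (div_pos hδ four_pos))).and
      (eventually_lt_of_continuous_of_eq_zero (f := fun τ ↦ C * τ + 2 * L * C * τ ^ 2)
        (by fun_prop) (by simp) (half_pos hσ))).and self_mem_nhdsWithin).exists
  refine ⟨δ * τ / 2, by positivity, fun p hp hpδ Y ρ hρ ↦ ?_⟩
  have hball : closedBall p 1 ⊆ closedBall 0 (R + 1) :=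
    closedBall_subset_closedBall' (by rw [add_comm]; gcongr; exact hp)
  have hpC := hC p (hball (mem_closedBall_self zero_le_one))
  have hC₀ : 0 ≤ C := (norm_nonneg _).trans hpC
  have hd₁ : |(drift a₁ a₂ α₁ α₂ p).1| ≤ C := (norm_fst_le _).trans hpC
  have hd₂ : |(drift a₁ a₂ α₁ α₂ p).2| ≤ C := (norm_snd_le _).trans hpC
  -- an Euler step with the vertical drift cancelled advances `s * x` by about `τ * δ`;
  -- a vertical correction then brings the point back to height `Y`
  obtain ⟨w, hpw, hw, -⟩ := exists_reachable_near_euler (κ₁ := κ₁) hκ₂ zero_le_one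
    (fun z hz ↦ hC z (hball hz)) (hL.mono hball) (-(drift a₁ a₂ α₁ α₂ p).2) hτ.le
    (by rw [abs_neg]; nlinarith)
  have he : L * (C + |-(drift a₁ a₂ α₁ α₂ p).2|) * τ ^ 2 ≤ 2 * L * C * τ ^ 2 := by
    rw [abs_neg]
    calc _ ≤ L * (C + C) * τ ^ 2 := by gcongr
      _ = 2 * L * C * τ ^ 2 := by ring
  set t := min (δ * τ / 4) (min (σ / 2) ρ)
  obtain ⟨q, hwq, hq₁, hq₂⟩ := exists_reachable_near_vertical hκ₂ w Y (show 0 < t by positivity)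
  have ht₁ : t ≤ δ * τ / 4 := min_le_left _ _
  have ht₂ : t ≤ σ / 2 := (min_le_right _ _).trans (min_le_left _ _)
  have ht₃ : t ≤ ρ := (min_le_right _ _).trans (min_le_right _ _)
  have herr : 2 * L * C * τ ^ 2 ≤ δ * τ / 4 := by nlinarith
  have hτd : |τ * (drift a₁ a₂ α₁ α₂ p).1| ≤ C * τ := by
    rw [abs_mul, abs_of_pos hτ, mul_comm]; gcongr
  have hgain : δ * τ ≤ s * (τ * (drift a₁ a₂ α₁ α₂ p).1) := by nlinarith
  refine ⟨q, hpw.trans hwq, ?_, ?_, by linarith⟩ <;>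
    rcases (abs_eq zero_le_one).1 hs with rfl | rfl <;>
    linarith [abs_le.1 hw, abs_lt.1 hq₁, abs_le.1 hτd]

theorem exists_reachable_march (hκ₂ : κ₂ ≠ 0) {s x₁ x₂ σ Y ρ δ : ℝ} (hs : |s| = 1) (hσ : 0 < σ)
    (hρ : 0 < ρ) (hδ : 0 < δ)
    (hdrift : ∀ z : ℝ × ℝ, s * z.1 ∈ Icc x₁ x₂ → |z.2 - Y| < ρ →
      δ ≤ s * (drift a₁ a₂ α₁ α₂ z).1)
    {p : ℝ × ℝ} (hp₁ : s * p.1 ∈ Icc x₁ x₂) (hp₂ : |p.2 - Y| < ρ) :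
    ∃ q, Reachable a₁ a₂ α₁ α₂ κ₁ κ₂ p q ∧ s * q.1 ∈ Icc (x₂ - σ) x₂ := by
  obtain ⟨μ, hμ, hstep⟩ := exists_march_step (κ₁ := κ₁) hκ₂ (|x₁| + |x₂| + |Y| + ρ) hs hδ hσ
  set S := {z : ℝ × ℝ | s * z.1 ∈ Icc x₁ x₂ ∧ |z.2 - Y| < ρ}
  have hS : S ⊆ closedBall 0 (|x₁| + |x₂| + |Y| + ρ) := by
    rintro z ⟨⟨hz₁, hz₂⟩, hzY⟩
    have hz : |z.1| = |s * z.1| := by rw [abs_mul, hs, one_mul]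
    rw [mem_closedBall_zero_iff, Prod.norm_def, max_le_iff, Real.norm_eq_abs, Real.norm_eq_abs, hz,
      abs_le, abs_le]
    have := abs_sub_abs_le_abs_sub z.2 Y
    refine ⟨⟨?_, ?_⟩, ⟨?_, ?_⟩⟩ <;>
      linarith [abs_nonneg x₁, abs_nonneg x₂, abs_nonneg Y, neg_abs_le x₁, le_abs_self x₂,
        (abs_lt.1 hzY).1, (abs_lt.1 hzY).2, le_abs_self Y, neg_abs_le Y]
  have hstepS : ∀ z ∈ S, s * z.1 < x₂ - σ →
      ∃ q ∈ S, Reachable a₁ a₂ α₁ α₂ κ₁ κ₂ z q ∧ s * z.1 + μ ≤ s * q.1 := by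
    intro z hz hzG
    obtain ⟨q, hzq, hμq, hσq, hqY⟩ := hstep z (hS hz) (hdrift z hz.1 hz.2) Y ρ hρ
    exact ⟨q, ⟨⟨by linarith [hz.1.1], by linarith⟩, hqY⟩, hzq, hμq⟩
  obtain ⟨q, ⟨hq, -⟩, hpq, hqG⟩ := exists_rel_le_of_forall_exists_add_le (φ := fun z ↦ s * z.1)
    hμ hstepS (show p ∈ S from ⟨hp₁, hp₂⟩)
  exact ⟨q, hpq, hqG, hq.2⟩

theorem exists_forall_one_le_drift_fst (x₁ x₂ : ℝ) :
    ∃ Y : ℝ, ∀ z : ℝ × ℝ, z.1 ∈ Icc x₁ x₂ → |z.2 - Y| < 1 → 1 ≤ (drift a₁ a₂ α₁ α₂ z).1 := by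
  obtain ⟨m, hm⟩ := isCompact_Icc.bddBelow_image (f := fun x ↦ a₁ * x - α₁ * x ^ 2)
    (by fun_prop : Continuous _).continuousOn
  refine ⟨|m| + 2, fun z hz hzY ↦ ?_⟩
  have hmz : m ≤ a₁ * z.1 - α₁ * z.1 ^ 2 := hm ⟨z.1, hz, rfl⟩
  have hz₂ : |m| + 1 < z.2 := by linarith [(abs_lt.1 hzY).1]
  simp only [drift]
  nlinarith [abs_nonneg m, neg_abs_le m]

theorem drift_fst_le_of_le_fst (hα₁ : 0 < α₁) {X : ℝ} (hX : max (a₁ / α₁) 0 < X) {z : ℝ × ℝ}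
    (hz : X ≤ z.1) : (drift a₁ a₂ α₁ α₂ z).1 ≤ a₁ * X - α₁ * X ^ 2 + z.2 ^ 2 := by
  have hX₀ : 0 < X := (le_max_right _ _).trans_lt hX
  have haX : a₁ < α₁ * X := (div_lt_iff₀' hα₁).1 ((le_max_left _ _).trans_lt hX)
  have h : 0 ≤ (z.1 - X) * (α₁ * (z.1 + X) - a₁) :=
    mul_nonneg (sub_nonneg.2 hz) (by nlinarith)
  simp only [drift]
  linarith

theorem exists_reachable_le_fst (hκ₂ : κ₂ ≠ 0) (z : ℝ × ℝ) (X : ℝ) :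
    ∃ p, Reachable a₁ a₂ α₁ α₂ κ₁ κ₂ z p ∧ X ≤ p.1 := by
  obtain ⟨Y, hY⟩ := exists_forall_one_le_drift_fst (a₁ := a₁) (a₂ := a₂) (α₁ := α₁) (α₂ := α₂)
    (z.1 - 1) (max z.1 X + 1)
  have hdrift : ∀ p : ℝ × ℝ, 1 * p.1 ∈ Icc (z.1 - 1) (max z.1 X + 1) → |p.2 - Y| < 1 →
      1 ≤ 1 * (drift a₁ a₂ α₁ α₂ p).1 := by
    simpa only [one_mul] using hY
  obtain ⟨p, hzp, hp₁, hp₂⟩ := exists_reachable_near_vertical hκ₂ z Y one_pos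
  obtain ⟨q, hpq, hq⟩ := exists_reachable_march (κ₁ := κ₁) hκ₂ abs_one one_pos one_pos one_pos
    hdrift (p := p) (by
      rw [one_mul]
      constructor <;> linarith [(abs_lt.1 hp₁).1, (abs_lt.1 hp₁).2, le_max_left z.1 X]) hp₂
  rw [one_mul] at hq
  exact ⟨q, hzp.trans hpq, by linarith [le_max_right z.1 X, hq.1]⟩

theorem exists_reachable_fst_mem_Icc (hα₁ : 0 < α₁) (hκ₂ : κ₂ ≠ 0) {X ε : ℝ}
    (hX : max (a₁ / α₁) 0 < X) (hε : 0 < ε) {p : ℝ × ℝ} (hp : X + ε ≤ p.1) :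
    ∃ q, Reachable a₁ a₂ α₁ α₂ κ₁ κ₂ p q ∧ q.1 ∈ Icc X (X + ε) := by
  have hX₀ : 0 < X := (le_max_right _ _).trans_lt hX
  have haX : a₁ < α₁ * X := (div_lt_iff₀' hα₁).1 ((le_max_left _ _).trans_lt hX)
  set δ := (α₁ * X ^ 2 - a₁ * X) / 2
  have hδ : 0 < δ := by simp only [δ]; nlinarith [mul_pos hX₀ (sub_pos.2 haX)]
  have hXδ : a₁ * X - α₁ * X ^ 2 = -2 * δ := by simp only [δ]; ring
  set ρ := min 1 δ
  have hρ : 0 < ρ := lt_min one_pos hδ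
  have hρ₁ : ρ ≤ 1 := min_le_left _ _
  have hρδ : ρ ≤ δ := min_le_right _ _
  have hdrift : ∀ z : ℝ × ℝ, -1 * z.1 ∈ Icc (-(p.1 + 1)) (-X) → |z.2 - 0| < ρ →
      δ ≤ -1 * (drift a₁ a₂ α₁ α₂ z).1 := by
    intro z hz₁ hz₂
    have hle := drift_fst_le_of_le_fst (a₂ := a₂) (α₂ := α₂) (z := z) hα₁ hX (by linarith [hz₁.2])
    rw [sub_zero] at hz₂
    have : z.2 ^ 2 ≤ δ := by nlinarith [abs_nonneg z.2, sq_abs z.2]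
    linarith
  obtain ⟨p₁, hpp₁, hp₁, hp₁₂⟩ := exists_reachable_near_vertical hκ₂ p 0 (lt_min hρ hε)
  have hρε : min ρ ε ≤ ρ := min_le_left _ _
  have hεε : min ρ ε ≤ ε := min_le_right _ _
  obtain ⟨q, hp₁q, hq⟩ := exists_reachable_march (κ₁ := κ₁) hκ₂ (s := -1) (by simp) hε hρ hδ
    hdrift (p := p₁)
    (by constructor <;> linarith [(abs_lt.1 hp₁).1, (abs_lt.1 hp₁).2]) (by linarith)
  exact ⟨q, hpp₁.trans hp₁q, by constructor <;> linarith [hq.1, hq.2]⟩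

theorem mem_closure_reachable (hα₁ : 0 < α₁) (hκ₂ : κ₂ ≠ 0) (z : ℝ × ℝ) {w : ℝ × ℝ}
    (hw : max (a₁ / α₁) 0 < w.1) : w ∈ closure {q | Reachable a₁ a₂ α₁ α₂ κ₁ κ₂ z q} := by
  rw [Metric.mem_closure_iff]
  intro ε hε
  obtain ⟨p, hzp, hp⟩ := exists_reachable_le_fst (κ₁ := κ₁) hκ₂ z (w.1 + ε / 2)
  obtain ⟨q, hpq, hq⟩ := exists_reachable_fst_mem_Icc hα₁ hκ₂ hw (half_pos hε) hp
  obtain ⟨r, hqr, hr₁, hr₂⟩ := exists_reachable_near_vertical hκ₂ q w.2 (half_pos hε)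
  refine ⟨r, (hzp.trans hpq).trans hqr, ?_⟩
  rw [Prod.dist_eq, max_lt_iff, Real.dist_eq, Real.dist_eq, abs_sub_comm w.2, abs_sub_lt_iff]
  exact ⟨by constructor <;> linarith [hq.1, hq.2, (abs_lt.1 hr₁).1, (abs_lt.1 hr₁).2],
    by linarith⟩

end ControlSystem

theorem statement13_general (a₁ a₂ α₁ α₂ κ₁ κ₂ : ℝ) (hα₁ : 0 < α₁)
    (hκ₂ : 0 < κ₂) (z₀ w₀ : ℝ × ℝ) :
    ∃ U : Set (ℝ × ℝ), U.Nonempty ∧ IsOpen U ∧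
      U ⊆ closure {w : ℝ × ℝ | Reachable a₁ a₂ α₁ α₂ κ₁ κ₂ z₀ w}
        ∩ closure {w : ℝ × ℝ | Reachable a₁ a₂ α₁ α₂ κ₁ κ₂ w₀ w} :=
  ⟨{w | max (a₁ / α₁) 0 < w.1}, ⟨(max (a₁ / α₁) 0 + 1, 0), lt_add_one (max (a₁ / α₁) 0)⟩,
    isOpen_lt continuous_const continuous_fst,
    fun _ hw ↦ ⟨mem_closure_reachable hα₁ hκ₂.ne' z₀ hw, mem_closure_reachable hα₁ hκ₂.ne' w₀ hw⟩⟩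

/-- any two accessibility sets have closures containing a common
nonempty open set. -/
theorem statement13 (a₁ a₂ α₁ α₂ κ₁ κ₂ : ℝ) (hα₁ : 0 < α₁) (hα : α₁ < α₂)
    (hκ₁ : 0 ≤ κ₁) (hκ₂ : 0 < κ₂) (z₀ w₀ : ℝ × ℝ) :
    ∃ U : Set (ℝ × ℝ), U.Nonempty ∧ IsOpen U ∧
      U ⊆ closure {w : ℝ × ℝ | Reachable a₁ a₂ α₁ α₂ κ₁ κ₂ z₀ w}
        ∩ closure {w : ℝ × ℝ | Reachable a₁ a₂ α₁ α₂ κ₁ κ₂ w₀ w} :=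
  statement13_general a₁ a₂ α₁ α₂ κ₁ κ₂ hα₁ hκ₂ z₀ w₀
end
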